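/- Let a, D, λ, μ > 0, and set α := 4πλDa + μ and β := 4a²λ√(πD/α). Define f(s) := (4πλDa + 4a²λ√(πD/s)) · exp(−4πλDas − 8a²λ√(πDs)) for s > 0. Then for every t > 0, ∫₀^t f(s) e^{−μs} ds = (1 − μ/α)(1 − exp(−2β√(αt) − αt)) + (√π β μ/α) e^{β²} (erf(β + √(αt)) − erf(β)). -/

import Mathlib

/-- The error function `erf x = (2/√π) ∫₀ˣ e^{-u²} du`. -/
noncomputable def erf (x : ℝ) : ℝ :=
  (2 / Real.sqrt Real.pi) * ∫ u in (0:ℝ)..x, Real.exp (-u ^ 2)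

/-- The hitting rate
`f(s) = (4πλDa + 4a²λ√(πD/s)) · exp(−4πλDas − 8a²λ√(πDs))`. -/
noncomputable def hitRate (a D lam s : ℝ) : ℝ :=
  (4 * Real.pi * lam * D * a + 4 * a ^ 2 * lam * Real.sqrt (Real.pi * D / s)) *
    Real.exp (-(4 * Real.pi * lam * D * a * s)
      - 8 * a ^ 2 * lam * Real.sqrt (Real.pi * D * s))

/-! The right-hand side, read as a function `G` of the horizon, vanishes at `0`. Completing
the square, `β² - (β + √(αs))² = -2β√(αs) - αs`, so the erf term differentiates to a multiple
of the same exponential as the first term, and `G'(s) = (α - μ + β√α/√s) e^{-αs - 2β√(αs)}`.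
Since `α - μ = 4πλDa` and `β√α = 4a²λ√(πD)`, this is exactly `f(s) e^{-μs}`. The integrand is
nonnegative, so having an antiderivative continuous on `[0, t]` makes it integrable, and the
fundamental theorem of calculus gives the identity. -/

open Real Set

theorem hasDerivAt_erf (x : ℝ) : HasDerivAt erf (2 / √π * exp (-x ^ 2)) x :=
  ((continuous_exp.comp (continuous_pow 2).neg).integral_hasStrictDerivAt 0 x).hasDerivAt
    |>.const_mul _

@[fun_prop]
theorem continuous_erf : Continuous erf :=
  continuous_iff_continuousAt.2 fun x => (hasDerivAt_erf x).continuousAt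

theorem intervalIntegral.integral_eq_sub_of_hasDerivAt_of_nonneg {g g' : ℝ → ℝ} {a b : ℝ}
    (hab : a ≤ b) (hcont : ContinuousOn g (Icc a b))
    (hderiv : ∀ x ∈ Ioo a b, HasDerivAt g (g' x) x) (hpos : ∀ x ∈ Ioo a b, 0 ≤ g' x) :
    ∫ x in a..b, g' x = g b - g a :=
  integral_eq_sub_of_hasDerivAt_of_le hab hcont hderiv <|
    (intervalIntegrable_iff_integrableOn_Ioc_of_le hab).2 <|
      integrableOn_deriv_of_nonneg hcont hderiv hpos

theorem hitRate_nonneg {a D lam : ℝ} (ha : 0 ≤ a) (hD : 0 ≤ D) (hlam : 0 ≤ lam) (s : ℝ) :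
    0 ≤ hitRate a D lam s := by
  unfold hitRate; positivity

noncomputable def degradedHitProb (α β μ s : ℝ) : ℝ :=
  (1 - μ / α) * (1 - exp (-(2 * β * √(α * s)) - α * s))
    + (√π * β * μ / α) * exp (β ^ 2) * (erf (β + √(α * s)) - erf β)

theorem continuous_degradedHitProb (α β μ : ℝ) : Continuous (degradedHitProb α β μ) := by
  unfold degradedHitProb; fun_prop

theorem degradedHitProb_zero (α β μ : ℝ) : degradedHitProb α β μ 0 = 0 := by
  simp [degradedHitProb]

theorem hasDerivAt_degradedHitProb {α s : ℝ} (β μ : ℝ) (hα : 0 < α) (hs : 0 < s) :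
    HasDerivAt (degradedHitProb α β μ)
      ((α - μ + β * √α / √s) * exp (-(2 * β * (√α * √s)) - α * s)) s := by
  have hαs : 0 < α * s := by positivity
  have hsqrt : HasDerivAt (fun s => √(α * s)) (α / (2 * √(α * s))) s := by
    simpa [div_eq_inv_mul, mul_comm] using
      ((hasDerivAt_id s).const_mul α).sqrt hαs.ne'
  have hexp := ((hsqrt.const_mul (2 * β)).neg.sub ((hasDerivAt_id s).const_mul α)).exp
  have herf := (hasDerivAt_erf _).comp s (hsqrt.const_add β)
  refine ((((hasDerivAt_const s 1).sub hexp).const_mul (1 - μ / α)).add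
    ((herf.sub_const (erf β)).const_mul (√π * β * μ / α * exp (β ^ 2)))).congr_deriv ?_
  simp only [sqrt_mul hα.le, Pi.sub_apply, Pi.neg_apply, id]
  have hsα : √α ^ 2 = α := sq_sqrt hα.le
  have hss : √s ^ 2 = s := sq_sqrt hs.le
  have hgauss :
      exp (β ^ 2) * exp (-(β + √α * √s) ^ 2) = exp (-(2 * β * (√α * √s)) - α * s) := by
    rw [← exp_add]; congr 1; linear_combination (-√s ^ 2) * hsα - α * hss
  have : √α ≠ 0 := (sqrt_pos.2 hα).ne'
  have : √s ≠ 0 := (sqrt_pos.2 hs).ne'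
  have : √π ≠ 0 := (sqrt_pos.2 pi_pos).ne'
  rw [← hgauss]
  field_simp
  linear_combination (-α * β * exp (β ^ 2) * exp (-(β + √α * √s) ^ 2)) * hsα

theorem hitRate_mul_exp_eq {a D lam μ α β s : ℝ} (hα₀ : 0 < α)
    (hα : α = 4 * π * lam * D * a + μ) (hβ : β = 4 * a ^ 2 * lam * √(π * D / α)) (hs : 0 ≤ s) :
    hitRate a D lam s * exp (-μ * s) =
      (α - μ + β * √α / √s) * exp (-(2 * β * (√α * √s)) - α * s) := by
  have hβα : β * √α = 4 * a ^ 2 * lam * √(π * D) := by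
    rw [hβ, sqrt_div' _ hα₀.le]
    field_simp [(sqrt_pos.2 hα₀).ne']
  rw [hitRate, sqrt_div' _ hs, sqrt_mul' _ hs, mul_assoc, ← exp_add, hβα]
  congr 1
  · rw [hα]; ring
  · congr 1; linear_combination 2 * √s * hβα + s * hα

/-- Theorem 2: for `α = 4πλDa + μ` and `β = 4a²λ√(πD/α)`, the hitting probability of a
degradable molecule within time `t` is
`∫₀ᵗ f(s) e^{−μs} ds
  = (1 − μ/α)(1 − exp(−2β√(αt) − αt)) + (√π β μ/α) e^{β²}(erf(β + √(αt)) − erf(β))`. -/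
theorem degradable_hitting_probability (a D lam mu : ℝ) (ha : 0 < a) (hD : 0 < D)
    (hlam : 0 < lam) (hmu : 0 < mu) (α β : ℝ)
    (hα : α = 4 * Real.pi * lam * D * a + mu)
    (hβ : β = 4 * a ^ 2 * lam * Real.sqrt (Real.pi * D / α))
    (t : ℝ) (ht : 0 < t) :
    (∫ s in (0:ℝ)..t, hitRate a D lam s * Real.exp (-mu * s)) =
    (1 - mu / α) * (1 - Real.exp (-(2 * β * Real.sqrt (α * t)) - α * t))
      + (Real.sqrt Real.pi * β * mu / α) * Real.exp (β ^ 2) *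
          (erf (β + Real.sqrt (α * t)) - erf β) := by
  have hα₀ : 0 < α := by rw [hα]; positivity
  have hderiv (s : ℝ) (hs : s ∈ Ioo 0 t) : HasDerivAt (degradedHitProb α β mu)
      (hitRate a D lam s * exp (-mu * s)) s :=
    (hasDerivAt_degradedHitProb β mu hα₀ hs.1).congr_deriv
      (hitRate_mul_exp_eq hα₀ hα hβ hs.1.le).symm
  rw [intervalIntegral.integral_eq_sub_of_hasDerivAt_of_nonneg ht.le
    (continuous_degradedHitProb α β mu).continuousOn hderiv
    fun s _ => mul_nonneg (hitRate_nonneg ha.le hD.le hlam.le s) (exp_pos _).le,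
    degradedHitProb_zero, sub_zero, degradedHitProb]
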